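/- Under Assumptions 1 and 2, as n → ∞, the p×p random matrix Π'Z'V/K_n converges in probability to the zero matrix. -/

import Mathlib

open MeasureTheory ProbabilityTheory Filter Matrix
open scoped BigOperators NNReal ENNReal

noncomputable section

/-- Convergence in probability of a sequence of real random variables to a constant. -/
def TendstoInProb {Ω : Type*} [MeasurableSpace Ω] (μ : Measure Ω)
    (X : ℕ → Ω → ℝ) (c : ℝ) : Prop :=
  ∀ ε : ℝ, 0 < ε →
    Tendsto (fun n => μ {ω | ε ≤ |X n ω - c|}) atTop (nhds 0)

/-- The instrumental-variable model with many instruments: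
`y = Y β + u`, `Y = Z Π + V`, where for sample size `n` there are `K n`
instruments.  The disturbances `(V_i, u_i)` form an infinite sequence of rows,
of which the `n`-sample uses the first `n`. -/
structure IVModel (Ω : Type) [MeasurableSpace Ω] (p : ℕ) where
  K : ℕ → ℕ
  Z : (n : ℕ) → Ω → Fin n → Fin (K n) → ℝ
  Pi : (n : ℕ) → Fin (K n) → Fin p → ℝ
  V : Ω → ℕ → Fin p → ℝ
  u : Ω → ℕ → ℝ
  beta : Fin p → ℝ
  s : ℕ → ℝ
  alpha : ℝ
  kappa : ℝ
  Theta : Matrix (Fin p) (Fin p) ℝ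
  SigVV : Matrix (Fin p) (Fin p) ℝ
  SigVu : Fin p → ℝ
  sigu2 : ℝ

namespace IVModel

variable {Ω : Type} [MeasurableSpace Ω] {p : ℕ}

def Zmat (M : IVModel Ω p) (n : ℕ) (ω : Ω) : Matrix (Fin n) (Fin (M.K n)) ℝ :=
  Matrix.of (M.Z n ω)

def Pimat (M : IVModel Ω p) (n : ℕ) : Matrix (Fin (M.K n)) (Fin p) ℝ :=
  Matrix.of (M.Pi n)

def Vmat (M : IVModel Ω p) (n : ℕ) (ω : Ω) : Matrix (Fin n) (Fin p) ℝ :=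
  Matrix.of fun (i : Fin n) (j : Fin p) => M.V ω i j

def uvec (M : IVModel Ω p) (n : ℕ) (ω : Ω) : Fin n → ℝ :=
  fun i => M.u ω i

/-- `Y = Z Π + V`. -/
def Ymat (M : IVModel Ω p) (n : ℕ) (ω : Ω) : Matrix (Fin n) (Fin p) ℝ :=
  M.Zmat n ω * M.Pimat n + M.Vmat n ω

/-- `y = Y β + u`. -/
def yvec (M : IVModel Ω p) (n : ℕ) (ω : Ω) : Fin n → ℝ :=
  (M.Ymat n ω) *ᵥ M.beta + M.uvec n ω

/-- Projection onto the column space of `Z`: `P_Z = Z (Z'Z)⁻¹ Z'`. -/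
def PZ (M : IVModel Ω p) (n : ℕ) (ω : Ω) : Matrix (Fin n) (Fin n) ℝ :=
  M.Zmat n ω * ((M.Zmat n ω)ᵀ * M.Zmat n ω)⁻¹ * (M.Zmat n ω)ᵀ

/-- The 2SLS estimator `β̂ = (Y'P_Z Y)⁻¹ Y'P_Z y`. -/
def beta2SLS (M : IVModel Ω p) (n : ℕ) (ω : Ω) : Fin p → ℝ :=
  ((M.Ymat n ω)ᵀ * M.PZ n ω * M.Ymat n ω)⁻¹ *ᵥ
    (((M.Ymat n ω)ᵀ * M.PZ n ω) *ᵥ M.yvec n ω)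

/-- The OLS estimator `β̂ = (Y'Y)⁻¹ Y'y`. -/
def betaOLS (M : IVModel Ω p) (n : ℕ) (ω : Ω) : Fin p → ℝ :=
  ((M.Ymat n ω)ᵀ * M.Ymat n ω)⁻¹ *ᵥ ((M.Ymat n ω)ᵀ *ᵥ M.yvec n ω)

/-- Assumption 1: `K n / n → α ∈ (0,1)`; `s` is a nondecreasing positive sequence with
`s n / n → κ ∈ [0, ∞)` and `Π'Z'ZΠ / s n → Θ` a.s. for a positive definite `Θ`. -/
def Assumption1 (M : IVModel Ω p) (μ : Measure Ω) : Prop :=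
  Tendsto (fun n => (M.K n : ℝ) / n) atTop (nhds M.alpha) ∧
  0 < M.alpha ∧ M.alpha < 1 ∧
  Monotone M.s ∧ (∀ n, 0 < M.s n) ∧
  0 ≤ M.kappa ∧
  Tendsto (fun n => M.s n / n) atTop (nhds M.kappa) ∧
  M.Theta.PosDef ∧
  ∀ᵐ ω ∂μ, ∀ i j : Fin p,
    Tendsto (fun n =>
        (((M.Pimat n)ᵀ * (M.Zmat n ω)ᵀ * M.Zmat n ω * M.Pimat n) i j) / M.s n)
      atTop (nhds (M.Theta i j))

/-- Assumption 2: `Z` is independent of `(V, u)`, the rows of `Z` are i.i.d.,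
the rows `(V_i, u_i)` are i.i.d. with mean zero, covariances `Σ_VV`, `σ_u²`, `Σ_Vu`,
and uniformly bounded fourth moments. -/
def Assumption2 (M : IVModel Ω p) (μ : Measure Ω) : Prop :=
  (∀ n : ℕ, Measurable (fun ω => M.Z n ω)) ∧
  Measurable M.V ∧ Measurable M.u ∧
  (∀ n : ℕ, IndepFun (fun ω => M.Z n ω) (fun ω => (M.V ω, M.u ω)) μ) ∧
  (∀ n : ℕ, iIndepFun (fun (i : Fin n) ω => M.Z n ω i) μ) ∧
  (∀ n : ℕ, ∀ i j : Fin n, IdentDistrib (fun ω => M.Z n ω i) (fun ω => M.Z n ω j) μ μ) ∧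
  iIndepFun (fun (i : ℕ) ω => (M.V ω i, M.u ω i)) μ ∧
  (∀ i : ℕ, IdentDistrib (fun ω => (M.V ω i, M.u ω i)) (fun ω => (M.V ω 0, M.u ω 0)) μ μ) ∧
  (∀ j, ∫ ω, M.V ω 0 j ∂μ = 0) ∧ (∫ ω, M.u ω 0 ∂μ = 0) ∧
  (∀ j k, ∫ ω, M.V ω 0 j * M.V ω 0 k ∂μ = M.SigVV j k) ∧
  (∫ ω, (M.u ω 0) ^ 2 ∂μ = M.sigu2) ∧
  (∀ j, ∫ ω, M.V ω 0 j * M.u ω 0 ∂μ = M.SigVu j) ∧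
  (∃ C₁ C₂ : ℝ,
    Integrable (fun ω => (M.u ω 0) ^ 4) μ ∧ (∫ ω, (M.u ω 0) ^ 4 ∂μ) < C₁ ∧
    (∀ j, Integrable (fun ω => (M.V ω 0 j) ^ 4) μ) ∧
    (∀ j, (∫ ω, (M.V ω 0 j) ^ 4 ∂μ) < C₂))

end IVModel

section Helpers

variable {Ω : Type} [MeasurableSpace Ω] {p : ℕ}

/-- The `i`-th entry of `ZΠ` in column `a`. -/
def wfun (M : IVModel Ω p) (a : Fin p) (n : ℕ) (ω : Ω) (i : Fin n) : ℝ :=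
  ∑ k, M.Z n ω i k * M.Pi n k a

lemma entry_PiZV (M : IVModel Ω p) (a b : Fin p) (n : ℕ) (ω : Ω) :
    ((M.Pimat n)ᵀ * (M.Zmat n ω)ᵀ * M.Vmat n ω) a b
      = ∑ i, wfun M a n ω i * M.V ω i b := by
  have h : (M.Pimat n)ᵀ * (M.Zmat n ω)ᵀ * M.Vmat n ω
      = (M.Zmat n ω * M.Pimat n)ᵀ * M.Vmat n ω := by
    rw [Matrix.transpose_mul]
  rw [h, Matrix.mul_apply]
  refine Finset.sum_congr rfl fun i _ => ?_
  have : (M.Zmat n ω * M.Pimat n) i a = wfun M a n ω i := by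
    simp [Matrix.mul_apply, wfun, IVModel.Pimat, IVModel.Zmat]
  rw [Matrix.transpose_apply, this]
  rfl

lemma entry_PiZZPi (M : IVModel Ω p) (a : Fin p) (n : ℕ) (ω : Ω) :
    ((M.Pimat n)ᵀ * (M.Zmat n ω)ᵀ * M.Zmat n ω * M.Pimat n) a a
      = ∑ i, (wfun M a n ω i) ^ 2 := by
  have h : (M.Pimat n)ᵀ * (M.Zmat n ω)ᵀ * M.Zmat n ω * M.Pimat n
      = (M.Zmat n ω * M.Pimat n)ᵀ * (M.Zmat n ω * M.Pimat n) := by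
    rw [Matrix.transpose_mul, Matrix.mul_assoc]
  rw [h, Matrix.mul_apply]
  refine Finset.sum_congr rfl fun i _ => ?_
  have : (M.Zmat n ω * M.Pimat n) i a = wfun M a n ω i := by
    simp [Matrix.mul_apply, wfun, IVModel.Pimat, IVModel.Zmat]
  rw [Matrix.transpose_apply, this]; ring

lemma wfun_measurable (M : IVModel Ω p) (hZ : ∀ n : ℕ, Measurable (fun ω => M.Z n ω))
    (a : Fin p) (n : ℕ) (i : Fin n) : Measurable (fun ω => wfun M a n ω i) := by
  refine Finset.measurable_sum _ fun k _ => ?_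
  exact (((measurable_pi_apply k).comp ((measurable_pi_apply i).comp (hZ n)))).mul measurable_const

lemma Ventry_measurable (M : IVModel Ω p) (hV : Measurable M.V) (i : ℕ) (b : Fin p) :
    Measurable (fun ω => M.V ω i b) :=
  (measurable_pi_apply b).comp ((measurable_pi_apply i).comp hV)

lemma theta_diag_pos (M : IVModel Ω p) (hΘ : M.Theta.PosDef) (a : Fin p) :
    0 < M.Theta a a := by
  exact hΘ.diag_pos

end Helpers
section Helpers2
set_option linter.unusedSectionVars false
set_option linter.unusedVariables false

variable {Ω : Type} [MeasurableSpace Ω] {p : ℕ} {μ : Measure Ω} [IsProbabilityMeasure μ]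
  {M : IVModel Ω p}

lemma Vb_identDistrib
    (hid : ∀ i : ℕ, IdentDistrib (fun ω => (M.V ω i, M.u ω i)) (fun ω => (M.V ω 0, M.u ω 0)) μ μ)
    (i : ℕ) (b : Fin p) :
    IdentDistrib (fun ω => M.V ω i b) (fun ω => M.V ω 0 b) μ μ :=
  (hid i).comp (show Measurable (fun q : (Fin p → ℝ) × ℝ => q.1 b) from
    (measurable_pi_apply b).comp measurable_fst)

lemma Vbsq_identDistrib
    (hid : ∀ i : ℕ, IdentDistrib (fun ω => (M.V ω i, M.u ω i)) (fun ω => (M.V ω 0, M.u ω 0)) μ μ)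
    (i : ℕ) (b : Fin p) :
    IdentDistrib (fun ω => (M.V ω i b) ^ 2) (fun ω => (M.V ω 0 b) ^ 2) μ μ :=
  (Vb_identDistrib hid i b).comp (measurable_id.pow_const 2)

lemma Vbsq_integrable (hV : Measurable M.V)
    (hid : ∀ i : ℕ, IdentDistrib (fun ω => (M.V ω i, M.u ω i)) (fun ω => (M.V ω 0, M.u ω 0)) μ μ)
    (hV4 : ∀ j, Integrable (fun ω => (M.V ω 0 j) ^ 4) μ)
    (i : ℕ) (b : Fin p) :
    Integrable (fun ω => (M.V ω i b) ^ 2) μ := by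
  rw [(Vbsq_identDistrib hid i b).integrable_iff]
  refine Integrable.mono' ((integrable_const (1 : ℝ)).add (hV4 b))
    ((Ventry_measurable M hV 0 b).pow_const 2).aestronglyMeasurable ?_
  filter_upwards with ω
  have := sq_nonneg ((M.V ω 0 b) ^ 2 - 1)
  simp only [Real.norm_eq_abs, Pi.add_apply, abs_pow]
  nlinarith [sq_nonneg (M.V ω 0 b), sq_abs (M.V ω 0 b)]

lemma Vb_integrable (hV : Measurable M.V)
    (hid : ∀ i : ℕ, IdentDistrib (fun ω => (M.V ω i, M.u ω i)) (fun ω => (M.V ω 0, M.u ω 0)) μ μ)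
    (hV4 : ∀ j, Integrable (fun ω => (M.V ω 0 j) ^ 4) μ)
    (i : ℕ) (b : Fin p) :
    Integrable (fun ω => M.V ω i b) μ := by
  refine Integrable.mono' ((integrable_const (1 : ℝ)).add (Vbsq_integrable hV hid hV4 i b))
    (Ventry_measurable M hV i b).aestronglyMeasurable ?_
  filter_upwards with ω
  simp only [Real.norm_eq_abs, Pi.add_apply]
  nlinarith [sq_nonneg (|M.V ω i b| - 1), sq_abs (M.V ω i b), abs_nonneg (M.V ω i b)]

lemma Vb_mul_integrable (hV : Measurable M.V)
    (hid : ∀ i : ℕ, IdentDistrib (fun ω => (M.V ω i, M.u ω i)) (fun ω => (M.V ω 0, M.u ω 0)) μ μ)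
    (hV4 : ∀ j, Integrable (fun ω => (M.V ω 0 j) ^ 4) μ)
    (i j : ℕ) (b : Fin p) :
    Integrable (fun ω => M.V ω i b * M.V ω j b) μ := by
  refine Integrable.mono'
    ((Vbsq_integrable hV hid hV4 i b).add (Vbsq_integrable hV hid hV4 j b))
    ((Ventry_measurable M hV i b).mul (Ventry_measurable M hV j b)).aestronglyMeasurable ?_
  filter_upwards with ω
  simp only [Real.norm_eq_abs, Pi.add_apply, abs_mul]
  nlinarith [sq_nonneg (|M.V ω i b| - |M.V ω j b|), sq_abs (M.V ω i b), sq_abs (M.V ω j b)]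

lemma Vb_integral_zero (hV : Measurable M.V)
    (hid : ∀ i : ℕ, IdentDistrib (fun ω => (M.V ω i, M.u ω i)) (fun ω => (M.V ω 0, M.u ω 0)) μ μ)
    (hmean : ∀ j, ∫ ω, M.V ω 0 j ∂μ = 0) (i : ℕ) (b : Fin p) :
    ∫ ω, M.V ω i b ∂μ = 0 := by
  rw [(Vb_identDistrib hid i b).integral_eq]; exact hmean b

lemma Vb_cross_integral (hV : Measurable M.V)
    (hindep : iIndepFun (fun (i : ℕ) ω => (M.V ω i, M.u ω i)) μ)
    (hid : ∀ i : ℕ, IdentDistrib (fun ω => (M.V ω i, M.u ω i)) (fun ω => (M.V ω 0, M.u ω 0)) μ μ)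
    (hV4 : ∀ j, Integrable (fun ω => (M.V ω 0 j) ^ 4) μ)
    (hmean : ∀ j, ∫ ω, M.V ω 0 j ∂μ = 0)
    (i j : ℕ) (hij : i ≠ j) (b : Fin p) :
    ∫ ω, M.V ω i b * M.V ω j b ∂μ = 0 := by
  have hI : IndepFun (fun ω => M.V ω i b) (fun ω => M.V ω j b) μ := by
    have := hindep.indepFun hij
    exact this.comp (show Measurable (fun q : (Fin p → ℝ) × ℝ => q.1 b) from
      (measurable_pi_apply b).comp measurable_fst)
      (show Measurable (fun q : (Fin p → ℝ) × ℝ => q.1 b) from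
      (measurable_pi_apply b).comp measurable_fst)
  have := hI.integral_mul_eq_mul_integral (Vb_integrable hV hid hV4 i b).aestronglyMeasurable
    (Vb_integrable hV hid hV4 j b).aestronglyMeasurable
  rw [show ((fun ω => M.V ω i b) * fun ω => M.V ω j b) = fun ω => M.V ω i b * M.V ω j b from rfl] at this
  rw [this, Vb_integral_zero hV hid hmean i b, Vb_integral_zero hV hid hmean j b, mul_zero]

end Helpers2
section Helpers3
set_option linter.unusedSectionVars false
set_option linter.unusedVariables false

variable {Ω : Type} [MeasurableSpace Ω] {p : ℕ} {μ : Measure Ω} [IsProbabilityMeasure μ]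
  {M : IVModel Ω p}

/-- truncation indicator `1_{Q ≤ c}` where `Q = ∑ i (ZΠ)ᵢₐ²`. -/
def gw (M : IVModel Ω p) (a : Fin p) (c : ℝ) (n : ℕ) (ω : Ω) : ℝ :=
  if (∑ i, (wfun M a n ω i) ^ 2) ≤ c then 1 else 0

lemma Qfun_measurable (hZ : ∀ n : ℕ, Measurable (fun ω => M.Z n ω)) (a : Fin p) (n : ℕ) :
    Measurable (fun ω => ∑ i, (wfun M a n ω i) ^ 2) :=
  Finset.measurable_sum _ fun i _ => (wfun_measurable M hZ a n i).pow_const 2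

lemma gw_measurable (hZ : ∀ n : ℕ, Measurable (fun ω => M.Z n ω)) (a : Fin p) (c : ℝ) (n : ℕ) :
    Measurable (gw M a c n) :=
  Measurable.ite (measurableSet_le (Qfun_measurable hZ a n) measurable_const)
    measurable_const measurable_const

lemma Ffun_abs_le (a : Fin p) (c : ℝ) (hc : 0 ≤ c) (n : ℕ) (i j : Fin n) (ω : Ω) :
    |gw M a c n ω * wfun M a n ω i * wfun M a n ω j| ≤ c := by
  unfold gw
  split_ifs with h
  · have hi : (wfun M a n ω i) ^ 2 ≤ ∑ k, (wfun M a n ω k) ^ 2 :=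
      Finset.single_le_sum (f := fun k => (wfun M a n ω k) ^ 2)
        (fun k _ => sq_nonneg _) (Finset.mem_univ i)
    have hj : (wfun M a n ω j) ^ 2 ≤ ∑ k, (wfun M a n ω k) ^ 2 :=
      Finset.single_le_sum (f := fun k => (wfun M a n ω k) ^ 2)
        (fun k _ => sq_nonneg _) (Finset.mem_univ j)
    rw [one_mul, abs_mul]
    nlinarith [sq_abs (wfun M a n ω i), sq_abs (wfun M a n ω j),
      abs_nonneg (wfun M a n ω i), abs_nonneg (wfun M a n ω j), h, hi, hj]
  · simpa using hc

lemma Ffun_indep_H (n : ℕ)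
    (hZVu : IndepFun (fun ω => M.Z n ω) (fun ω => (M.V ω, M.u ω)) μ)
    (a b : Fin p) (c : ℝ) (i j : Fin n) :
    IndepFun (fun ω => gw M a c n ω * wfun M a n ω i * wfun M a n ω j)
      (fun ω => M.V ω i b * M.V ω j b) μ := by
  have hzw : ∀ i' : Fin n, Measurable (fun z : Fin n → Fin (M.K n) → ℝ =>
      ∑ k, z i' k * M.Pi n k a) := fun i' =>
    Finset.measurable_sum _ fun k _ =>
      Measurable.mul (f := fun z : Fin n → Fin (M.K n) → ℝ => z i' k) (g := fun _ => M.Pi n k a)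
        ((measurable_pi_apply k).comp (measurable_pi_apply i')) measurable_const
  have hφ : Measurable (fun z : Fin n → Fin (M.K n) → ℝ =>
      (if (∑ i', (∑ k, z i' k * M.Pi n k a) ^ 2) ≤ c then (1:ℝ) else 0)
        * (∑ k, z i k * M.Pi n k a) * (∑ k, z j k * M.Pi n k a)) := by
    refine Measurable.mul (Measurable.mul ?_ (hzw i)) (hzw j)
    exact Measurable.ite
      (measurableSet_le (Finset.measurable_sum _ fun i' _ => (hzw i').pow_const 2)
        measurable_const) measurable_const measurable_const
  have hψ : Measurable (fun q : (ℕ → Fin p → ℝ) × (ℕ → ℝ) => q.1 i b * q.1 j b) := by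
    have h1 : Measurable (fun q : (ℕ → Fin p → ℝ) × (ℕ → ℝ) => q.1 i b) :=
      ((measurable_pi_apply b).comp ((measurable_pi_apply (i:ℕ)).comp measurable_fst))
    have h2 : Measurable (fun q : (ℕ → Fin p → ℝ) × (ℕ → ℝ) => q.1 j b) :=
      ((measurable_pi_apply b).comp ((measurable_pi_apply (j:ℕ)).comp measurable_fst))
    exact h1.mul h2
  exact hZVu.comp hφ hψ

end Helpers3
section Helpers4
set_option linter.unusedSectionVars false
set_option linter.unusedVariables false

variable {Ω : Type} [MeasurableSpace Ω] {p : ℕ} {μ : Measure Ω} [IsProbabilityMeasure μ]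
  {M : IVModel Ω p}

def Ffun (M : IVModel Ω p) (a : Fin p) (c : ℝ) (n : ℕ) (i j : Fin n) (ω : Ω) : ℝ :=
  gw M a c n ω * wfun M a n ω i * wfun M a n ω j

def Hfun (M : IVModel Ω p) (b : Fin p) (i j : ℕ) (ω : Ω) : ℝ :=
  M.V ω i b * M.V ω j b

lemma Ffun_measurable (hZ : ∀ n : ℕ, Measurable (fun ω => M.Z n ω))
    (a : Fin p) (c : ℝ) (n : ℕ) (i j : Fin n) : Measurable (Ffun M a c n i j) :=
  ((gw_measurable hZ a c n).mul (wfun_measurable M hZ a n i)).mul (wfun_measurable M hZ a n j)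

lemma Ffun_integrable (hZ : ∀ n : ℕ, Measurable (fun ω => M.Z n ω))
    (a : Fin p) (c : ℝ) (hc : 0 ≤ c) (n : ℕ) (i j : Fin n) : Integrable (Ffun M a c n i j) μ :=
  Integrable.mono' (integrable_const c) (Ffun_measurable hZ a c n i j).aestronglyMeasurable
    (Filter.Eventually.of_forall fun ω => by
      simpa [Real.norm_eq_abs, Ffun] using Ffun_abs_le a c hc n i j ω)

lemma integral_T_le
    (hZ : ∀ n : ℕ, Measurable (fun ω => M.Z n ω)) (hV : Measurable M.V)
    (hZVu : ∀ n : ℕ, IndepFun (fun ω => M.Z n ω) (fun ω => (M.V ω, M.u ω)) μ)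
    (hindep : iIndepFun (fun (i : ℕ) ω => (M.V ω i, M.u ω i)) μ)
    (hid : ∀ i : ℕ, IdentDistrib (fun ω => (M.V ω i, M.u ω i)) (fun ω => (M.V ω 0, M.u ω 0)) μ μ)
    (hV4 : ∀ j, Integrable (fun ω => (M.V ω 0 j) ^ 4) μ)
    (hmean : ∀ j, ∫ ω, M.V ω 0 j ∂μ = 0)
    (a b : Fin p) (n : ℕ) (c : ℝ) (hc : 0 ≤ c) :
    Integrable (fun ω => gw M a c n ω * (∑ i, wfun M a n ω i * M.V ω i b) ^ 2) μ ∧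
    ∫ ω, gw M a c n ω * (∑ i, wfun M a n ω i * M.V ω i b) ^ 2 ∂μ
      ≤ c * ∫ ω, (M.V ω 0 b) ^ 2 ∂μ := by
  have hFm := fun (i j : Fin n) => Ffun_measurable (M := M) hZ a c n i j
  have hFint := fun (i j : Fin n) => Ffun_integrable (μ := μ) hZ a c hc n i j
  have hHint : ∀ i j : Fin n, Integrable (Hfun M b i j) μ :=
    fun i j => Vb_mul_integrable hV hid hV4 i j b
  have hFH : ∀ i j : Fin n, Integrable (fun ω => Ffun M a c n i j ω * Hfun M b i j ω) μ :=
    fun i j => (hHint i j).bdd_mul (hFm i j).aestronglyMeasurable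
      (Filter.Eventually.of_forall fun ω => by
        simpa [Real.norm_eq_abs, Ffun] using Ffun_abs_le a c hc n i j ω)
  have hpoint : ∀ ω, gw M a c n ω * (∑ i, wfun M a n ω i * M.V ω i b) ^ 2
      = ∑ i, ∑ j, Ffun M a c n i j ω * Hfun M b i j ω := by
    intro ω
    rw [sq, Finset.sum_mul_sum, Finset.mul_sum]
    apply Finset.sum_congr rfl
    intro i _
    rw [Finset.mul_sum]
    apply Finset.sum_congr rfl
    intro j _
    simp only [Ffun, Hfun]
    ring
  have hTint : Integrable (fun ω => gw M a c n ω * (∑ i, wfun M a n ω i * M.V ω i b) ^ 2) μ := by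
    rw [show (fun ω => gw M a c n ω * (∑ i, wfun M a n ω i * M.V ω i b) ^ 2)
        = fun ω => ∑ i, ∑ j, Ffun M a c n i j ω * Hfun M b i j ω from funext hpoint]
    exact integrable_finset_sum _ fun i _ => integrable_finset_sum _ fun j _ => hFH i j
  refine ⟨hTint, ?_⟩
  set σ2 : ℝ := ∫ ω, (M.V ω 0 b) ^ 2 ∂μ with hσ2
  have hσ2nonneg : 0 ≤ σ2 := integral_nonneg fun ω => sq_nonneg _
  have hHdiag : ∀ i : Fin n, ∫ ω, Hfun M b i i ω ∂μ = σ2 := by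
    intro i
    have h1 : ∫ ω, Hfun M b i i ω ∂μ = ∫ ω, (M.V ω i b) ^ 2 ∂μ := by
      apply integral_congr_ae
      filter_upwards with ω
      simp [Hfun, sq]
    rw [h1, (Vbsq_identDistrib hid i b).integral_eq]
  have hHoff : ∀ i j : Fin n, i ≠ j → ∫ ω, Hfun M b i j ω ∂μ = 0 := by
    intro i j hij
    exact Vb_cross_integral hV hindep hid hV4 hmean i j
      (fun h => hij (Fin.val_injective h)) b
  have hsplit : ∀ i j : Fin n, ∫ ω, Ffun M a c n i j ω * Hfun M b i j ω ∂μ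
      = (∫ ω, Ffun M a c n i j ω ∂μ) * (∫ ω, Hfun M b i j ω ∂μ) := by
    intro i j
    have := (Ffun_indep_H n (hZVu n) a b c i j).integral_mul_eq_mul_integral
      (hFint i j).aestronglyMeasurable (hHint i j).aestronglyMeasurable
    rw [show ((fun ω => gw M a c n ω * wfun M a n ω i * wfun M a n ω j)
        * fun ω => M.V ω i b * M.V ω j b)
        = fun ω => Ffun M a c n i j ω * Hfun M b i j ω from rfl] at this
    exact this
  have hint_eq : ∫ ω, gw M a c n ω * (∑ i, wfun M a n ω i * M.V ω i b) ^ 2 ∂μ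
      = ∑ i : Fin n, (∫ ω, Ffun M a c n i i ω ∂μ) * σ2 := by
    rw [show (fun ω => gw M a c n ω * (∑ i, wfun M a n ω i * M.V ω i b) ^ 2)
        = fun ω => ∑ i, ∑ j, Ffun M a c n i j ω * Hfun M b i j ω from funext hpoint]
    rw [integral_finset_sum _ fun i _ => integrable_finset_sum _ fun j _ => hFH i j]
    apply Finset.sum_congr rfl
    intro i _
    rw [integral_finset_sum _ fun j _ => hFH i j]
    have : ∀ j : Fin n, ∫ ω, Ffun M a c n i j ω * Hfun M b i j ω ∂μ
        = if j = i then (∫ ω, Ffun M a c n i i ω ∂μ) * σ2 else 0 := by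
      intro j
      by_cases hji : j = i
      · subst hji; rw [hsplit, hHdiag, if_pos rfl]
      · rw [hsplit, hHoff i j (fun h => hji h.symm), mul_zero, if_neg hji]
    rw [Finset.sum_congr rfl fun j _ => this j]
    simp
  rw [hint_eq]
  have hdiag_sum : ∑ i : Fin n, (∫ ω, Ffun M a c n i i ω ∂μ) * σ2
      = (∫ ω, gw M a c n ω * (∑ i, (wfun M a n ω i) ^ 2) ∂μ) * σ2 := by
    rw [← Finset.sum_mul]
    congr 1
    rw [← integral_finset_sum _ fun i _ => hFint i i]
    apply integral_congr_ae
    filter_upwards with ω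
    rw [Finset.mul_sum]
    apply Finset.sum_congr rfl
    intro i _
    simp only [Ffun]
    ring
  rw [hdiag_sum]
  have hgQ_le : ∫ ω, gw M a c n ω * (∑ i, (wfun M a n ω i) ^ 2) ∂μ ≤ c := by
    have hint : Integrable (fun ω => gw M a c n ω * (∑ i, (wfun M a n ω i) ^ 2)) μ := by
      refine Integrable.mono' (integrable_const c)
        (((gw_measurable hZ a c n).mul (Qfun_measurable hZ a n))).aestronglyMeasurable ?_
      filter_upwards with ω
      rw [Real.norm_eq_abs]
      unfold gw
      split_ifs with h
      · rw [one_mul, abs_of_nonneg (Finset.sum_nonneg fun i _ => sq_nonneg _)]; exact h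
      · simpa using hc
    have := integral_mono hint (integrable_const c) (fun ω => by
      unfold gw
      split_ifs with h
      · rw [one_mul]; exact h
      · simpa using hc)
    simpa using this
  calc (∫ ω, gw M a c n ω * (∑ i, (wfun M a n ω i) ^ 2) ∂μ) * σ2 ≤ c * σ2 :=
        mul_le_mul_of_nonneg_right hgQ_le hσ2nonneg
    _ = c * σ2 := rfl

end Helpers4
/-- **Lemma 1(b).** Under Assumptions 1 and 2, `Π'Z'V / K_n` converges in
probability to the zero matrix. -/
theorem PiZV_div_K_tendsto_zero {Ω : Type} [MeasurableSpace Ω] {p : ℕ}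
    (μ : Measure Ω) [IsProbabilityMeasure μ] (M : IVModel Ω p)
    (hA1 : M.Assumption1 μ) (hA2 : M.Assumption2 μ) :
    ∀ a b : Fin p,
      TendstoInProb μ
        (fun n ω => (((M.Pimat n)ᵀ * (M.Zmat n ω)ᵀ * M.Vmat n ω) a b) / (M.K n : ℝ))
        0 := by
  obtain ⟨hKα, hα0, hα1, hsmono, hspos, hκ0, hsκ, hΘpd, hΘconv⟩ := hA1
  obtain ⟨hZm, hVm, hum, hZVu, hZiid, hZid, hViid, hVid, hVmean, humean, hVcov, hucov,
    hVucov, C₁, C₂, hu4, hu4b, hV4, hV4b⟩ := hA2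
  intro a b ε hε
  set C : ℝ := M.Theta a a + 1 with hCdef
  have hC0 : 0 < C := by
    have := theta_diag_pos M hΘpd a
    rw [hCdef]; linarith
  set σ2 : ℝ := ∫ ω, (M.V ω 0 b) ^ 2 ∂μ with hσ2def
  have hσ2nonneg : 0 ≤ σ2 := integral_nonneg fun ω => sq_nonneg _
  set S1 : ℕ → Set Ω := fun n => {ω | C * M.s n < ∑ i, (wfun M a n ω i) ^ 2} with hS1def
  set S2 : ℕ → Set Ω := fun n => {ω | ε ^ 2 * (M.K n : ℝ) ^ 2
      ≤ gw M a (C * M.s n) n ω * (∑ i, wfun M a n ω i * M.V ω i b) ^ 2} with hS2def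
  set D : ℕ → ℝ := fun n => (C * M.s n * σ2) / (ε ^ 2 * (M.K n : ℝ) ^ 2) with hDdef
  -- inclusion of the bad event in the two exceptional sets
  have hsub : ∀ n, {ω | ε ≤ |(((M.Pimat n)ᵀ * (M.Zmat n ω)ᵀ * M.Vmat n ω) a b)
      / (M.K n : ℝ) - 0|} ⊆ S1 n ∪ S2 n := by
    intro n ω hω
    simp only [Set.mem_setOf_eq, sub_zero, entry_PiZV] at hω
    by_cases hQ : C * M.s n < ∑ i, (wfun M a n ω i) ^ 2
    · exact Or.inl hQ
    · right
      push_neg at hQ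
      have hg : gw M a (C * M.s n) n ω = 1 := if_pos hQ
      have hK0 : (0:ℝ) < (M.K n : ℝ) := by
        by_contra hK
        push_neg at hK
        have hKz : (M.K n : ℝ) = 0 := le_antisymm hK (Nat.cast_nonneg _)
        rw [hKz, div_zero, abs_zero] at hω
        linarith
      have habs : ε * (M.K n : ℝ) ≤ |∑ i, wfun M a n ω i * M.V ω i b| := by
        rw [abs_div, abs_of_pos hK0] at hω
        exact (le_div_iff₀ hK0).1 hω
      show ε ^ 2 * (M.K n : ℝ) ^ 2
          ≤ gw M a (C * M.s n) n ω * (∑ i, wfun M a n ω i * M.V ω i b) ^ 2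
      rw [hg, one_mul]
      have hsq := mul_self_le_mul_self (by positivity) habs
      nlinarith [sq_abs (∑ i, wfun M a n ω i * M.V ω i b)]
  -- Part 1 : μ (S1 n) → 0
  have hpart1 : Tendsto (fun n => μ (S1 n)) atTop (nhds 0) := by
    have h := tendsto_measure_of_ae_tendsto_indicator_of_isFiniteMeasure
      (μ := μ) (As := S1) atTop (A := (∅ : Set Ω)) MeasurableSet.empty
      (fun n => measurableSet_lt measurable_const (Qfun_measurable hZm a n)) ?_
    · simpa using h
    · filter_upwards [hΘconv] with ω hω
      have hten : Tendsto (fun n => (∑ i, (wfun M a n ω i) ^ 2) / M.s n) atTop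
          (nhds (M.Theta a a)) := by
        have := hω a a
        simpa only [entry_PiZZPi] using this
      have hev : ∀ᶠ n in atTop, (∑ i, (wfun M a n ω i) ^ 2) / M.s n < C :=
        hten.eventually_lt_const (by rw [hCdef]; linarith)
      filter_upwards [hev] with n hn
      simp only [Set.mem_empty_iff_false, iff_false, hS1def, Set.mem_setOf_eq, not_lt]
      rw [div_lt_iff₀ (hspos n)] at hn
      linarith [hn]
  -- Part 2 : Chebyshev bound on μ (S2 n)
  have hcheb : ∀ n, 1 ≤ M.K n → μ (S2 n) ≤ ENNReal.ofReal (D n) := by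
    intro n hK
    obtain ⟨hTint, hTle⟩ := integral_T_le hZm hVm hZVu hViid hVid hV4 hVmean a b n
      (C * M.s n) (mul_nonneg hC0.le (hspos n).le)
    have hTnonneg : 0 ≤ᵐ[μ] fun ω => gw M a (C * M.s n) n ω
        * (∑ i, wfun M a n ω i * M.V ω i b) ^ 2 := by
      filter_upwards with ω
      have hg : (0:ℝ) ≤ gw M a (C * M.s n) n ω := by unfold gw; split_ifs <;> norm_num
      positivity
    have hmarkov := mul_meas_ge_le_integral_of_nonneg hTnonneg hTint (ε ^ 2 * (M.K n : ℝ) ^ 2)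
    have hKpos : (0:ℝ) < (M.K n : ℝ) := by exact_mod_cast hK
    have hthr : (0:ℝ) < ε ^ 2 * (M.K n : ℝ) ^ 2 := by positivity
    have hset : {x | ε ^ 2 * (M.K n : ℝ) ^ 2 ≤ gw M a (C * M.s n) n x
        * (∑ i, wfun M a n x i * M.V x i b) ^ 2} = S2 n := rfl
    rw [hset] at hmarkov
    have htoReal : (μ (S2 n)).toReal ≤ D n := by
      rw [hDdef]
      rw [le_div_iff₀ hthr, mul_comm]
      calc ε ^ 2 * (M.K n : ℝ) ^ 2 * (μ (S2 n)).toReal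
          ≤ ∫ ω, gw M a (C * M.s n) n ω * (∑ i, wfun M a n ω i * M.V ω i b) ^ 2 ∂μ :=
            hmarkov
        _ ≤ C * M.s n * σ2 := hTle
    calc μ (S2 n) = ENNReal.ofReal ((μ (S2 n)).toReal) :=
          (ENNReal.ofReal_toReal (measure_ne_top μ _)).symm
      _ ≤ ENNReal.ofReal (D n) := ENNReal.ofReal_le_ofReal htoReal
  -- Part 3 : D n → 0
  have hDlim : Tendsto D atTop (nhds 0) := by
    have hnK : Tendsto (fun n : ℕ => (n : ℝ) / (M.K n : ℝ)) atTop (nhds (M.alpha)⁻¹) := by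
      have h := hKα.inv₀ (ne_of_gt hα0)
      simpa only [inv_div] using h
    have hprod : Tendsto (fun n : ℕ => (C * σ2 / ε ^ 2) * ((M.s n / n)
        * ((n : ℝ) / (M.K n : ℝ)) * ((n : ℝ) / (M.K n : ℝ)) * ((n : ℝ))⁻¹)) atTop
        (nhds ((C * σ2 / ε ^ 2) * (M.kappa * (M.alpha)⁻¹ * (M.alpha)⁻¹ * 0))) :=
      Tendsto.const_mul _ (((hsκ.mul hnK).mul hnK).mul tendsto_inv_atTop_nhds_zero_nat)
    rw [show (C * σ2 / ε ^ 2) * (M.kappa * (M.alpha)⁻¹ * (M.alpha)⁻¹ * 0) = 0 by ring]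
      at hprod
    refine hprod.congr' ?_
    filter_upwards [eventually_ge_atTop 1] with n hn
    have hn0 : (0:ℝ) < (n : ℝ) := by exact_mod_cast hn
    rw [hDdef]
    by_cases hKn : M.K n = 0
    · simp [hKn]
    · have hKpos : (0:ℝ) < (M.K n : ℝ) := by
        have : 0 < M.K n := Nat.pos_of_ne_zero hKn
        exact_mod_cast this
      field_simp
  -- eventually K n ≥ 1
  have hKev : ∀ᶠ n in atTop, 1 ≤ M.K n := by
    have h := (tendsto_order.1 hKα).1 0 hα0
    filter_upwards [h, eventually_ge_atTop 1] with n hn hn1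
    by_contra hK
    push_neg at hK
    interval_cases h : M.K n
    · simp at hn
  -- combine
  have hupper : Tendsto (fun n => μ (S1 n) + ENNReal.ofReal (D n)) atTop (nhds 0) := by
    have := hpart1.add (ENNReal.tendsto_ofReal hDlim)
    simpa using this
  refine tendsto_of_tendsto_of_tendsto_of_le_of_le'
    (g := fun _ : ℕ => (0:ℝ≥0∞)) (h := fun n => μ (S1 n) + ENNReal.ofReal (D n))
    tendsto_const_nhds hupper (Filter.Eventually.of_forall fun n => zero_le) ?_
  · filter_upwards [hKev] with n hK
    calc μ {ω | ε ≤ |(((M.Pimat n)ᵀ * (M.Zmat n ω)ᵀ * M.Vmat n ω) a b)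
          / (M.K n : ℝ) - 0|}
        ≤ μ (S1 n ∪ S2 n) := measure_mono (hsub n)
      _ ≤ μ (S1 n) + μ (S2 n) := measure_union_le _ _
      _ ≤ μ (S1 n) + ENNReal.ofReal (D n) := add_le_add le_rfl (hcheb n hK)
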